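/- Let G be a cop-win graph with at least two vertices that contains exactly one corner v. Then the capture time of G in the ordinary game satisfies capt(G) = capt(G − v) + 1. -/

import Mathlib

open SimpleGraph

variable {V : Type*}

/-- A cop of speed `s` may move from `u` to `v` by traversing at most `s` edges. -/
def copStep (G : SimpleGraph V) (s : ℕ) (u v : V) : Prop :=
  ∃ p : G.Walk u v, p.length ≤ s

/-- A robber of speed `s` may move from `u` to `v` by traversing at most `s` edges,
never passing through a vertex of `S` (the set of vertices occupied by cops). -/
def robberStep (G : SimpleGraph V) (s : ℕ) (S : Set V) (u v : V) : Prop :=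
  ∃ p : G.Walk u v, p.length ≤ s ∧ ∀ x ∈ p.support.tail, x ∉ S

/-- `CanCatch G sc sr n cops r` : cops (of speed `sc`) at positions `cops`, robber
(of speed `sr`) at `r`, cops about to move; the cops can force a capture within
`n` further rounds. -/
def CanCatch (G : SimpleGraph V) (sc sr : ℕ) {k : ℕ} : ℕ → (Fin k → V) → V → Prop
  | 0, cops, r => ∃ i, cops i = r
  | n + 1, cops, r => (∃ i, cops i = r) ∨
      ∃ cops' : Fin k → V, (∀ i, copStep G sc (cops i) (cops' i)) ∧
        ((∃ i, cops' i = r) ∨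
          ∀ r', robberStep G sr {x | ∃ i, cops' i = x} r r' →
            CanCatch G sc sr n cops' r')

/-- The speed-`(sc, sr)` cop number of `G`: the least number `k` of cops which have
a winning strategy when the cops move with speed `sc` and the robber with speed `sr`.
The ordinary cop number is `copNumber G 1 1`. -/
noncomputable def copNumber (G : SimpleGraph V) (sc sr : ℕ) : ℕ :=
  sInf {k : ℕ | ∃ cops : Fin k → V, ∀ r : V, ∃ n : ℕ, CanCatch G sc sr n cops r}

/-- The `s`-th power of `G` : distinct vertices are adjacent iff their distance
in `G` is at most `s`. -/
def graphPow (G : SimpleGraph V) (s : ℕ) : SimpleGraph V where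
  Adj u v := u ≠ v ∧ ∃ p : G.Walk u v, p.length ≤ s
  symm := by
    constructor
    rintro u v ⟨h, p, hp⟩
    exact ⟨h.symm, p.reverse, by simpa using hp⟩
  loopless := by constructor; rintro u ⟨h, -⟩; exact h rfl

/-- The capture time of `G` in the ordinary (speed-(1,1)) game: the least number of
rounds within which a single cop can guarantee capture, over the cop's best initial
placement (the initial placement is not counted as a round). -/
noncomputable def capt (G : SimpleGraph V) : ℕ :=
  sInf {n : ℕ | ∃ c : V, ∀ r : V, CanCatch G 1 1 n (fun _ : Fin 1 => c) r}

/-- `v` is a corner of `G`: some vertex `u ≠ v` satisfies `N[v] ⊆ N[u]`. -/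
def CornerVert (G : SimpleGraph V) (v : V) : Prop :=
  ∃ u, u ≠ v ∧ ∀ w, (w = v ∨ G.Adj v w) → (w = u ∨ G.Adj u w)


private lemma copStep_one {G : SimpleGraph V} {a b : V} :
    copStep G 1 a b ↔ a = b ∨ G.Adj a b := by
  constructor
  · rintro ⟨p, hp⟩
    cases p with
    | nil => exact Or.inl rfl
    | cons h q =>
      cases q with
      | nil => exact Or.inr h
      | cons h' q' => simp [SimpleGraph.Walk.length_cons] at hp
  · rintro (rfl | h)
    · exact ⟨.nil, by simp⟩
    · exact ⟨.cons h .nil, by simp⟩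

private lemma robberStep_one {G : SimpleGraph V} {S : Set V} {a b : V} :
    robberStep G 1 S a b ↔ a = b ∨ (G.Adj a b ∧ b ∉ S) := by
  constructor
  · rintro ⟨p, hp, hS⟩
    cases p with
    | nil => exact Or.inl rfl
    | cons h q =>
      cases q with
      | nil => exact Or.inr ⟨h, hS _ (by simp)⟩
      | cons h' q' => simp [SimpleGraph.Walk.length_cons] at hp
  · rintro (rfl | ⟨h, hb⟩)
    · exact ⟨.nil, by simp, by simp⟩
    · refine ⟨.cons h .nil, by simp, ?_⟩
      intro x hx
      simp at hx
      subst hx; exact hb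

private lemma catch_iff (G : SimpleGraph V) (n : ℕ) (c r : V) :
    CanCatch G 1 1 (n+1) (fun _ : Fin 1 => c) r ↔
      c = r ∨ ∃ c', (c = c' ∨ G.Adj c c') ∧
        (c' = r ∨ ∀ r', (r = r' ∨ (G.Adj r r' ∧ r' ≠ c')) →
            CanCatch G 1 1 n (fun _ : Fin 1 => c') r') := by
  constructor
  · rintro (⟨i, hi⟩ | ⟨cops', hstep, hrest⟩)
    · exact Or.inl hi
    · refine Or.inr ⟨cops' 0, copStep_one.mp (hstep 0), ?_⟩
      have hc' : cops' = fun _ : Fin 1 => cops' 0 :=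
        funext fun i => congrArg cops' (Subsingleton.elim i 0)
      rcases hrest with ⟨i, hi⟩ | hall
      · exact Or.inl ((congrArg cops' (Subsingleton.elim 0 i)).trans hi)
      · refine Or.inr fun r' hr' => ?_
        have hleg : robberStep G 1 {x | ∃ i, cops' i = x} r r' := by
          rcases hr' with rfl | ⟨h, hne⟩
          · exact robberStep_one.mpr (Or.inl rfl)
          · refine robberStep_one.mpr (Or.inr ⟨h, ?_⟩)
            rintro ⟨i, hi⟩
            apply hne
            rw [← hi]
            exact congrArg cops' (Subsingleton.elim i 0)
        have h2 := hall r' hleg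
        rwa [← hc']
  · rintro (hcr | ⟨c', hstep, hrest⟩)
    · exact Or.inl ⟨0, hcr⟩
    · refine Or.inr ⟨fun _ => c', fun i => copStep_one.mpr hstep, ?_⟩
      rcases hrest with rfl | hall
      · exact Or.inl ⟨0, rfl⟩
      · refine Or.inr fun r' hr' => ?_
        apply hall
        rcases robberStep_one.mp hr' with rfl | ⟨h, hb⟩
        · exact Or.inl rfl
        · exact Or.inr ⟨h, fun he => hb ⟨0, he.symm⟩⟩

private lemma canCatch_succ {G : SimpleGraph V} {sc sr k n : ℕ} {cops : Fin k → V} {r : V}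
    (h : CanCatch G sc sr n cops r) : CanCatch G sc sr (n+1) cops r := by
  induction n generalizing cops r with
  | zero => exact Or.inl h
  | succ n ih =>
    rcases h with h | ⟨cops', hs, h⟩
    · exact Or.inl h
    · refine Or.inr ⟨cops', hs, ?_⟩
      rcases h with h | h
      · exact Or.inl h
      · exact Or.inr fun r' hr' => ih (h r' hr')

private lemma canCatch_le {G : SimpleGraph V} {sc sr k m n : ℕ} {cops : Fin k → V} {r : V}
    (hmn : m ≤ n) (h : CanCatch G sc sr m cops r) : CanCatch G sc sr n cops r := by
  induction n with
  | zero => exact (Nat.le_zero.mp hmn) ▸ h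
  | succ n ih =>
    rcases Nat.lt_or_ge m (n+1) with hlt | hge
    · exact canCatch_succ (ih (Nat.lt_succ_iff.mp hlt))
    · exact (Nat.le_antisymm hmn hge) ▸ h

private lemma not_catch_nbr {W : Type*} {H : SimpleGraph W} {n : ℕ} {c r : W}
    (h : ¬ CanCatch H 1 1 (n+1) (fun _ : Fin 1 => c) r) : ¬(c = r ∨ H.Adj c r) := by
  rw [catch_iff] at h
  push_neg at h
  rintro (rfl | hadj)
  · exact h.1 rfl
  · exact (h.2 r (Or.inr hadj)).1 rfl

private lemma not_catch_one {W : Type*} {H : SimpleGraph W} {c r : W}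
    (h : ¬(c = r ∨ H.Adj c r)) : ¬ CanCatch H 1 1 1 (fun _ : Fin 1 => c) r := by
  rw [catch_iff]
  rintro (hcr | ⟨c', hstep, hrest⟩)
  · exact h (Or.inl hcr)
  · have hc'r : c' ≠ r := by
      rintro rfl
      rcases hstep with rfl | hs
      exacts [h (Or.inl rfl), h (Or.inr hs)]
    rcases hrest with hc | hall
    · exact hc'r hc
    · obtain ⟨i, hi⟩ := hall r (Or.inl rfl)
      exact hc'r hi

private lemma catch_succ_of {W : Type*} {H : SimpleGraph W} {n : ℕ} {c r : W}
    (h : c = r ∨ H.Adj c r) : CanCatch H 1 1 (n+1) (fun _ : Fin 1 => c) r := by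
  rw [catch_iff]; exact Or.inr ⟨r, h, Or.inl rfl⟩

private lemma uniform {W : Type*} [Finite W] {H : SimpleGraph W} {c : W}
    (h : ∀ r : W, ∃ n, CanCatch H 1 1 n (fun _ : Fin 1 => c) r) :
    ∃ N, ∀ r : W, CanCatch H 1 1 N (fun _ : Fin 1 => c) r := by
  cases nonempty_fintype W
  choose f hf using h
  exact ⟨Finset.univ.sup f, fun r => canCatch_le (Finset.le_sup (Finset.mem_univ r)) (hf r)⟩

open Classical in
private noncomputable def rt (G : SimpleGraph V) (v u : V) (huv : u ≠ v) : V → {x : V | x ≠ v} :=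
  fun x => if h : x = v then ⟨u, huv⟩ else ⟨x, h⟩

private lemma rt_hom (G : SimpleGraph V) (v u : V) (huv : u ≠ v)
    (hdom : ∀ w, (w = v ∨ G.Adj v w) → (w = u ∨ G.Adj u w)) {a b : V}
    (h : a = b ∨ G.Adj a b) :
    rt G v u huv a = rt G v u huv b ∨
      (SimpleGraph.induce {x : V | x ≠ v} G).Adj (rt G v u huv a) (rt G v u huv b) := by
  rcases h with rfl | h
  · exact Or.inl rfl
  · by_cases ha : a = v
    · have h' : G.Adj v b := ha ▸ h
      have hb : b ≠ v := fun e => G.loopless.irrefl v (e ▸ h')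
      rcases hdom b (Or.inr h') with h2 | h2
      · exact Or.inl (Subtype.ext (by simpa [rt, ha, hb] using h2.symm))
      · right
        show G.Adj ((rt G v u huv a : V)) ((rt G v u huv b : V))
        simpa [rt, ha, hb] using h2
    · by_cases hb : b = v
      · have h' : G.Adj v a := hb ▸ h.symm
        rcases hdom a (Or.inr h') with h2 | h2
        · exact Or.inl (Subtype.ext (by simpa [rt, ha, hb] using h2))
        · right
          show G.Adj ((rt G v u huv a : V)) ((rt G v u huv b : V))
          simpa [rt, ha, hb] using h2.symm
      · right
        show G.Adj ((rt G v u huv a : V)) ((rt G v u huv b : V))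
        simpa [rt, ha, hb] using h

private lemma rt_nbr (G : SimpleGraph V) (v u : V) (huv : u ≠ v)
    (hdom : ∀ w, (w = v ∨ G.Adj v w) → (w = u ∨ G.Adj u w)) {c : V} {r' : {x : V | x ≠ v}}
    (h : ¬(rt G v u huv c = r' ∨ (SimpleGraph.induce {x : V | x ≠ v} G).Adj (rt G v u huv c) r')) :
    ¬(c = ↑r' ∨ G.Adj c ↑r') := by
  rintro (he | hadj)
  · have hcv : c ≠ v := by rw [he]; exact r'.2
    exact h (Or.inl (Subtype.ext (by simpa [rt, hcv] using he)))
  · by_cases hc : c = v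
    · rcases hdom ↑r' (Or.inr (hc ▸ hadj)) with h2 | h2
      · exact h (Or.inl (Subtype.ext (by simpa [rt, hc] using h2.symm)))
      · exact h (Or.inr (by show G.Adj ((rt G v u huv c : V)) (↑r'); simpa [rt, hc] using h2))
    · exact h (Or.inr (by show G.Adj ((rt G v u huv c : V)) (↑r'); simpa [rt, hc] using hadj))


private lemma project (G : SimpleGraph V) (v u : V) (huv : u ≠ v)
    (hdom : ∀ w, (w = v ∨ G.Adj v w) → (w = u ∨ G.Adj u w)) :
    ∀ (n : ℕ) (c : V) (r : {x : V | x ≠ v}),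
    CanCatch G 1 1 n (fun _ : Fin 1 => c) (r : V) →
    CanCatch (SimpleGraph.induce {x : V | x ≠ v} G) 1 1 n (fun _ : Fin 1 => rt G v u huv c) r := by
  intro n
  induction n with
  | zero =>
    intro c r h
    obtain ⟨i, hi⟩ := h
    have hcv : c ≠ v := by rintro rfl; exact r.2 hi.symm
    exact ⟨0, Subtype.ext (by simpa [rt, hcv] using hi)⟩
  | succ n ih =>
    intro c r h
    rw [catch_iff] at h ⊢
    rcases h with hcr | ⟨c₁, hstep, hrest⟩
    · have hcv : c ≠ v := by rintro rfl; exact r.2 hcr.symm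
      exact Or.inl (Subtype.ext (by simpa [rt, hcv] using hcr))
    · refine Or.inr ⟨rt G v u huv c₁, rt_hom G v u huv hdom hstep, ?_⟩
      rcases hrest with hc | hall
      · have hc₁v : c₁ ≠ v := by rintro rfl; exact r.2 hc.symm
        exact Or.inl (Subtype.ext (by simpa [rt, hc₁v] using hc))
      · refine Or.inr fun r'' hr'' => ?_
        apply ih c₁ r''
        apply hall
        rcases hr'' with heq | ⟨hadj, hne⟩
        · exact Or.inl (congrArg Subtype.val heq)
        · refine Or.inr ⟨hadj, ?_⟩
          intro he
          apply hne
          have hc₁v : c₁ ≠ v := by rw [← he]; exact r''.2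
          exact Subtype.ext (by simpa [rt, hc₁v] using he)

private lemma lift (G : SimpleGraph V) (v u : V) (huv : u ≠ v)
    (hdom : ∀ w, (w = v ∨ G.Adj v w) → (w = u ∨ G.Adj u w)) (hAdjuv : G.Adj u v) :
    ∀ (n : ℕ) (c : {x : V | x ≠ v}) (r : V),
    CanCatch (SimpleGraph.induce {x : V | x ≠ v} G) 1 1 n (fun _ : Fin 1 => c) (rt G v u huv r) →
    CanCatch G 1 1 (n+1) (fun _ : Fin 1 => (c : V)) r := by
  intro n
  induction n with
  | zero =>
    intro c r h
    obtain ⟨i, hi⟩ := h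
    have hi' : c = rt G v u huv r := hi
    by_cases hr : r = v
    · have hcu : (c : V) = u := by rw [hi']; simp [rt, hr]
      exact catch_succ_of (Or.inr (by rw [hcu, hr]; exact hAdjuv))
    · exact catch_succ_of (Or.inl (by rw [hi']; simp [rt, hr]))
  | succ n ih =>
    intro c r h
    rw [catch_iff] at h
    rw [catch_iff]
    rcases h with hc | ⟨c₁, hstep, hrest⟩
    · by_cases hr : r = v
      · have hcu : (c : V) = u := by rw [hc]; simp [rt, hr]
        exact Or.inr ⟨v, Or.inr (by rw [hcu]; exact hAdjuv), Or.inl hr.symm⟩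
      · exact Or.inl (by rw [hc]; simp [rt, hr])
    · refine Or.inr ⟨(c₁ : V), ?_, ?_⟩
      · rcases hstep with he | ha
        · exact Or.inl (congrArg Subtype.val he)
        · exact Or.inr ha
      rcases hrest with hc | hall
      · by_cases hr : r = v
        · have hcu : (c₁ : V) = u := by rw [hc]; simp [rt, hr]
          refine Or.inr fun r₁ hr₁ => ?_
          apply catch_succ_of
          rcases hr₁ with heq | ⟨hadj, hne⟩
          · exact Or.inr (by rw [hcu, ← heq, hr]; exact hAdjuv)
          · rcases hdom r₁ (Or.inr (hr ▸ hadj)) with h2 | h2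
            · exact Or.inl (hcu.trans h2.symm)
            · exact Or.inr (by rw [hcu]; exact h2)
        · exact Or.inl (by rw [hc]; simp [rt, hr])
      · refine Or.inr fun r₁ hr₁ => ?_
        by_cases hcap : rt G v u huv r₁ = c₁
        · by_cases hr₁v : r₁ = v
          · have hcu : (c₁ : V) = u := by rw [← hcap]; simp [rt, hr₁v]
            apply catch_succ_of
            exact Or.inr (by rw [hcu, hr₁v]; exact hAdjuv)
          · exact catch_succ_of (Or.inl (by rw [← hcap]; simp [rt, hr₁v]))
        · apply ih c₁ r₁
          apply hall
          rcases rt_hom G v u huv hdom (hr₁.imp id And.left) with he | ha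
          · exact Or.inl he
          · exact Or.inr ⟨ha, hcap⟩

private lemma evade (G : SimpleGraph V) (v u : V) (huv : u ≠ v)
    (hdom : ∀ w, (w = v ∨ G.Adj v w) → (w = u ∨ G.Adj u w))
    (hnc : ∀ x, CornerVert G x → x = v) :
    ∀ (m : ℕ) (c r : V) (hr : r ≠ v),
    ¬((c = r) ∨ G.Adj c r) →
    ¬ CanCatch (SimpleGraph.induce {x : V | x ≠ v} G) 1 1 m
        (fun _ : Fin 1 => rt G v u huv c) ⟨r, hr⟩ →
    ¬ CanCatch G 1 1 (m+1) (fun _ : Fin 1 => c) r := by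
  intro m
  induction m with
  | zero =>
    intro c r hr hc hsh
    rw [catch_iff]
    rintro (hcr | ⟨c₁, hstep, hrest⟩)
    · exact hc (Or.inl hcr)
    · have hc₁r : c₁ ≠ r := by rintro rfl; exact hc hstep
      rcases hrest with h | hall
      · exact hc₁r h
      · obtain ⟨i, hi⟩ := hall r (Or.inl rfl)
        exact hc₁r hi
  | succ m ih =>
    intro c r hr hc hsh
    rw [catch_iff]
    rintro (hcr | ⟨c₁, hstep, hrest⟩)
    · exact hc (Or.inl hcr)
    · have hc₁r : c₁ ≠ r := by rintro rfl; exact hc hstep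
      rcases hrest with h | hall
      · exact hc₁r h
      · cases m with
        | zero =>
          have hrc : ¬ CornerVert G r := fun h => hr (hnc r h)
          unfold CornerVert at hrc
          push_neg at hrc
          obtain ⟨w, hw1, hw2, hw3⟩ := hrc c₁ hc₁r
          have hleg : r = w ∨ (G.Adj r w ∧ w ≠ c₁) := by
            rcases hw1 with h | h
            · exact Or.inl h.symm
            · exact Or.inr ⟨h, hw2⟩
          refine not_catch_one ?_ (hall w hleg)
          rintro (h | h)
          exacts [hw2 h.symm, hw3 h]
        | succ m'' =>
          rw [catch_iff] at hsh
          push_neg at hsh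
          obtain ⟨-, h2⟩ := hsh
          obtain ⟨-, r'', hleg, hsh'⟩ := h2 (rt G v u huv c₁) (rt_hom G v u huv hdom hstep)
          have hnbr' := rt_nbr G v u huv hdom (not_catch_nbr hsh')
          have hev := ih c₁ (↑r'') r''.2 hnbr' hsh'
          apply hev
          apply hall
          rcases hleg with he | ⟨ha, hne⟩
          · exact Or.inl (congrArg Subtype.val he)
          · exact Or.inr ⟨ha, fun e => hnbr' (Or.inl e.symm)⟩

/-- If `G` is a cop-win graph with at least two vertices whose unique corner is `v`,
then `capt(G) = capt(G − v) + 1`. -/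
theorem statement19 [Fintype V] (G : SimpleGraph V)
    (hwin : copNumber G 1 1 = 1) (hcard : 2 ≤ Fintype.card V)
    (v : V) (hv : CornerVert G v) (huniq : ∀ x, CornerVert G x → x = v) :
    capt G = capt (SimpleGraph.induce {x : V | x ≠ v} G) + 1 := by
  classical
  obtain ⟨u, huv, hdom⟩ := hv
  have hAdjuv : G.Adj u v :=
    (hdom v (Or.inl rfl)).resolve_left (fun h => huv h.symm)
  -- G is winnable with one cop
  have hwin1 : ∃ cops : Fin 1 → V, ∀ r, ∃ n, CanCatch G 1 1 n cops r := by
    have hne : {k : ℕ | ∃ cops : Fin k → V, ∀ r : V, ∃ n, CanCatch G 1 1 n cops r}.Nonempty := by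
      by_contra h
      rw [Set.not_nonempty_iff_eq_empty] at h
      have h0 : copNumber G 1 1 = 0 := by
        rw [copNumber, h, Nat.sInf_empty]
      rw [h0] at hwin
      exact one_ne_zero hwin.symm
    have h1 : copNumber G 1 1 ∈ {k : ℕ | ∃ cops : Fin k → V, ∀ r : V, ∃ n, CanCatch G 1 1 n cops r} :=
      Nat.sInf_mem hne
    rw [hwin] at h1
    exact h1
  obtain ⟨cops, hcops⟩ := hwin1
  have hcopsfun : (fun _ : Fin 1 => cops 0) = cops :=
    funext fun i => congrArg cops (Subsingleton.elim 0 i)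
  have hcops' : ∀ r, ∃ n, CanCatch G 1 1 n (fun _ : Fin 1 => cops 0) r := by
    intro r
    obtain ⟨n, hn⟩ := hcops r
    exact ⟨n, by rw [hcopsfun]; exact hn⟩
  set S := {n : ℕ | ∃ c : V, ∀ r : V, CanCatch G 1 1 n (fun _ : Fin 1 => c) r} with hSdef
  set S' := {n : ℕ | ∃ c : {x : V | x ≠ v},
      ∀ r : {x : V | x ≠ v},
        CanCatch (SimpleGraph.induce {x : V | x ≠ v} G) 1 1 n (fun _ : Fin 1 => c) r} with hS'def
  have hS'ne : S'.Nonempty := by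
    have hall : ∀ r : {x : V | x ≠ v}, ∃ n,
        CanCatch (SimpleGraph.induce {x : V | x ≠ v} G) 1 1 n
          (fun _ : Fin 1 => rt G v u huv (cops 0)) r := by
      intro r
      obtain ⟨n, hn⟩ := hcops' (r : V)
      exact ⟨n, project G v u huv hdom n (cops 0) r hn⟩
    obtain ⟨N, hN⟩ := uniform hall
    exact ⟨N, rt G v u huv (cops 0), hN⟩
  have hcapt' : capt (SimpleGraph.induce {x : V | x ≠ v} G) = sInf S' := rfl
  have ht'mem : capt (SimpleGraph.induce {x : V | x ≠ v} G) ∈ S' := by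
    rw [hcapt']; exact Nat.sInf_mem hS'ne
  set t' := capt (SimpleGraph.induce {x : V | x ≠ v} G) with ht'def
  -- upper bound : t' + 1 ∈ S
  have hupper : t' + 1 ∈ S := by
    obtain ⟨c', hc'⟩ := ht'mem
    exact ⟨(c' : V), fun r => lift G v u huv hdom hAdjuv t' c' r (hc' (rt G v u huv r))⟩
  -- lower bound : t' ∉ S
  have hlow : t' ∉ S := by
    rintro ⟨c, hc⟩
    rcases Nat.lt_or_ge t' 1 with h0 | h1
    · -- t' = 0
      have ht0 : t' = 0 := by omega
      rw [ht0] at hc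
      obtain ⟨b, hb⟩ := Fintype.exists_ne_of_one_lt_card (by omega) c
      obtain ⟨i, hi⟩ := hc b
      exact hb hi.symm
    rcases Nat.lt_or_ge t' 2 with h1' | h2
    · -- t' = 1
      have ht1 : t' = 1 := by omega
      have huniv : ∀ x, c = x ∨ G.Adj c x := by
        intro x
        by_contra hx
        exact not_catch_one hx (ht1 ▸ hc x)
      have hcorner : ∀ x, x ≠ c → x = v := by
        intro x hx
        exact huniq x ⟨c, Ne.symm hx, fun w _ => (huniv w).imp Eq.symm id⟩
      have hcv : c ≠ v := by
        obtain ⟨b, hb⟩ := Fintype.exists_ne_of_one_lt_card (by omega) v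
        rintro rfl
        exact hb (hcorner b hb)
      have h0S' : (0:ℕ) ∈ S' := by
        refine ⟨⟨c, hcv⟩, fun r => ⟨0, ?_⟩⟩
        refine Subtype.ext ?_
        show c = (r : V)
        by_contra hne
        exact r.2 (hcorner (r : V) (Ne.symm hne))
      have : t' ≤ 0 := Nat.sInf_le h0S'
      omega
    · -- t' ≥ 2
      have hlt1 : t' - 1 < t' := by omega
      have hnm : t' - 1 ∉ S' := Nat.notMem_of_lt_sInf hlt1
      rw [hS'def] at hnm
      simp only [Set.mem_setOf_eq] at hnm
      push_neg at hnm
      obtain ⟨r₀, hr₀⟩ := hnm (rt G v u huv c)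
      obtain ⟨m'', hm⟩ : ∃ m'', t' - 1 = m'' + 1 := ⟨t' - 2, by omega⟩
      rw [hm] at hr₀
      have hnbr' := rt_nbr G v u huv hdom (not_catch_nbr hr₀)
      have hev := evade G v u huv hdom huniq (m'' + 1) c (↑r₀) r₀.2 hnbr' hr₀
      apply hev
      have he : m'' + 1 + 1 = t' := by omega
      rw [he]
      exact hc (↑r₀)
  have hgeq : ∀ n ∈ S, t' + 1 ≤ n := by
    intro n hn
    by_contra hlt
    push_neg at hlt
    obtain ⟨c, hcn⟩ := hn
    exact hlow ⟨c, fun r => canCatch_le (by omega) (hcn r)⟩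
  have hcapt : capt G = sInf S := rfl
  rw [hcapt]
  exact le_antisymm (Nat.sInf_le hupper) (le_csInf ⟨_, hupper⟩ hgeq)
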